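/- arXiv:0908.2185 — 3 statements merged into one kernel-verified Lean document; each statement's English description precedes it below -/
import Mathlib

section
/- For each i ∈ {1,…,m−1}, the map q_{m,i}(L_1,…,L_m) := (L_1,…,L_{i−1}, zL_{i+2},…, zL_m) is a well-defined surjection from X_{m,i} onto Y_{m−2}. -/
open scoped ComplexInnerProductSpace

noncomputable section

abbrev E (N : ℕ) := EuclideanSpace ℂ (Fin N ⊕ Fin N)

def zmap (N : ℕ) : E N →ₗ[ℂ] E N where
  toFun v := WithLp.toLp 2 fun i =>
    match i with
    | Sum.inl j => if h : (j : ℕ) + 1 < N then v (Sum.inl ⟨(j : ℕ) + 1, h⟩) else 0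
    | Sum.inr j => if h : (j : ℕ) + 1 < N then v (Sum.inr ⟨(j : ℕ) + 1, h⟩) else 0
  map_add' u v := by
    ext i
    rcases i with j | j <;> simp only [PiLp.add_apply] <;> split <;> simp
  map_smul' c v := by
    ext i
    rcases i with j | j <;> simp only [PiLp.smul_apply, RingHom.id_apply, smul_eq_mul] <;>
      split <;> simp

def Cmap (N : ℕ) : E N →ₗ[ℂ] EuclideanSpace ℂ (Fin 2) where
  toFun v := WithLp.toLp 2 fun i => if i = 0 then ∑ j : Fin N, v (Sum.inl j) else ∑ j : Fin N, v (Sum.inr j)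
  map_add' u v := by
    ext i
    by_cases h : i = (0 : Fin 2) <;> simp [h, PiLp.add_apply, Finset.sum_add_distrib]
  map_smul' c v := by
    ext i
    by_cases h : i = (0 : Fin 2) <;> simp [h, PiLp.smul_apply, Finset.mul_sum]

/-- `Ym N m` : complete flags `0 = L_0 ⊊ L_1 ⊊ … ⊊ L_m` of `z`-stable subspaces of `E`
with `dim L_j = j`.  A tuple `(L_1,…,L_m) ∈ Y_m` is encoded as the function
`L : Fin (m+1) → Submodule ℂ (E N)` with the convention `L 0 = 0`. -/
def Ym (N m : ℕ) : Set (Fin (m + 1) → Submodule ℂ (E N)) :=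
  {L | L 0 = ⊥ ∧ StrictMono L ∧ (∀ j : Fin (m + 1), Module.finrank ℂ (L j) = (j : ℕ)) ∧
    ∀ j : Fin (m + 1), (L j).map (zmap N) ≤ L j}

/-- The map `φ_m`, in coordinates: `φ_m(L)_j = C(L_{j+1} ∩ L_j^⊥)` (0-based `j`),
i.e. the tuple `(C(L_1), C(L_2 ∩ L_1^⊥), …, C(L_m ∩ L_{m-1}^⊥))`. -/
def phiRaw (N m : ℕ) (L : Fin (m + 1) → Submodule ℂ (E N)) :
    Fin m → Submodule ℂ (EuclideanSpace ℂ (Fin 2)) :=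
  fun j => ((L j.succ) ⊓ (L j.castSucc)ᗮ).map (Cmap N)

/-- `X_{m,i} = {(L_1,…,L_m) ∈ Y_m : L_{i+1} = z^{-1}(L_{i-1})}` (with `L_0 = 0`). -/
def Xmi (N m i : ℕ) : Set (Fin (m + 1) → Submodule ℂ (E N)) :=
  {L | L ∈ Ym N m ∧ ∀ (h : i + 1 < m + 1) (h' : i - 1 < m + 1),
    L ⟨i + 1, h⟩ = (L ⟨i - 1, h'⟩).comap (zmap N)}

/-- `A_{m,i} = {(l_1,…,l_m) ∈ (ℙ¹)^m : l_{i+1} = l_i^⊥}`; a point of `(ℙ¹)^m` is encoded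
as a tuple of rank-one subspaces of `ℂ²`, the line `l_k` sitting at 0-based index `k-1`. -/
def Ami (m i : ℕ) : Set (Fin m → Submodule ℂ (EuclideanSpace ℂ (Fin 2))) :=
  {l | (∀ j, Module.finrank ℂ (l j) = 1) ∧
    ∀ (h : i < m) (h' : i - 1 < m), l ⟨i, h⟩ = (l ⟨i - 1, h'⟩)ᗮ}

/-- `q_{m,i}(L_1,…,L_m) = (L_1,…,L_{i-1}, zL_{i+2},…,zL_m)`. -/
def qRaw (N m i : ℕ) (hm : 2 ≤ m) (L : Fin (m + 1) → Submodule ℂ (E N)) :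
    Fin (m - 2 + 1) → Submodule ℂ (E N) :=
  fun j =>
    if (j : ℕ) < i then L ⟨(j : ℕ), by have := j.isLt; omega⟩
    else (L ⟨(j : ℕ) + 2, by have := j.isLt; omega⟩).map (zmap N)

/-- The forgetful map `g_{m,i}(l_1,…,l_m) = (l_1,…,l_{i-1}, l_{i+2},…,l_m)`. -/
def gRaw (m i : ℕ) (l : Fin m → Submodule ℂ (EuclideanSpace ℂ (Fin 2))) :
    Fin (m - 2) → Submodule ℂ (EuclideanSpace ℂ (Fin 2)) :=
  fun k =>
    if (k : ℕ) + 1 < i then l ⟨(k : ℕ), by have := k.isLt; omega⟩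
    else l ⟨(k : ℕ) + 2, by have := k.isLt; omega⟩

/-- The involution `I_{2n}` of `(ℙ¹)^m`: `l_j ↦ l_j` for `j` odd, `l_j ↦ l_j^⊥` for `j` even
(the line `l_j` sits at 0-based index `j-1`). -/
def Imap (m : ℕ) (l : Fin m → Submodule ℂ (EuclideanSpace ℂ (Fin 2))) :
    Fin m → Submodule ℂ (EuclideanSpace ℂ (Fin 2)) :=
  fun k => if (k : ℕ) % 2 = 0 then l k else (l k)ᗮ

/-- A crossingless matching of the `2n` points `{1,…,2n}`: a partition of `{1,…,2n}` into
`n` pairs (each pair recorded as `(i,j)` with `i < j`) such that there is no quadruple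
`i < j < k < l` with `(i,k)` and `(j,l)` paired. -/
structure CrossinglessMatching (n : ℕ) where
  pairs : Finset (ℕ × ℕ)
  card_eq : pairs.card = n
  lt : ∀ p ∈ pairs, p.1 < p.2
  mem_range : ∀ p ∈ pairs, 1 ≤ p.1 ∧ p.2 ≤ 2 * n
  cover : ∀ k, 1 ≤ k → k ≤ 2 * n → ∃! p, p ∈ pairs ∧ (p.1 = k ∨ p.2 = k)
  noncross : ∀ i j k l : ℕ, i < j → j < k → k < l → (i, k) ∈ pairs → (j, l) ∉ pairs

open Fin.NatCast in
/-- `{(L_1,…,L_m) ∈ Y_m : L_{s_a(j)} = z^{-d_a(j)} L_{j-1} for all j ∈ O_a}`, where for a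
pair `(i,j)` of the matching, `s_a(i) = j`, `d_a(i) = (j-i+1)/2`, and `z^{-d}` is the
`d`-fold preimage under `z`. -/
def KaSet (N m : ℕ) (pairs : Finset (ℕ × ℕ)) : Set (Fin (m + 1) → Submodule ℂ (E N)) :=
  {L | L ∈ Ym N m ∧ ∀ p ∈ pairs,
    L ((p.2 : Fin (m + 1))) =
      (L ((p.1 - 1 : ℕ) : Fin (m + 1))).comap ((zmap N) ^ ((p.2 - p.1 + 1) / 2))}

/-- `S_a = {(l_1,…,l_{2n}) ∈ (ℙ¹)^{2n} : l_{s_a(j)} = l_j ∀ j ∈ O_a}` (0-based indexing, so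
`l_k` sits at index `k-1`). -/
def SaSet (m : ℕ) (pairs : Finset (ℕ × ℕ)) :
    Set (Fin m → Submodule ℂ (EuclideanSpace ℂ (Fin 2))) :=
  {l | (∀ j, Module.finrank ℂ (l j) = 1) ∧
    ∀ p ∈ pairs, ∀ (h2 : p.2 - 1 < m) (h1 : p.1 - 1 < m), l ⟨p.2 - 1, h2⟩ = l ⟨p.1 - 1, h1⟩}

/-- `T_a = {(l_1,…,l_{2n}) ∈ (ℙ¹)^{2n} : l_{s_a(j)} = l_j^⊥ ∀ j ∈ O_a}`. -/
def TaSet (m : ℕ) (pairs : Finset (ℕ × ℕ)) :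
    Set (Fin m → Submodule ℂ (EuclideanSpace ℂ (Fin 2))) :=
  {l | (∀ j, Module.finrank ℂ (l j) = 1) ∧
    ∀ p ∈ pairs, ∀ (h2 : p.2 - 1 < m) (h1 : p.1 - 1 < m), l ⟨p.2 - 1, h2⟩ = (l ⟨p.1 - 1, h1⟩)ᗮ}

/-! The argument rests on three properties of the nilpotent shift `z`: `ker z` is two-dimensional;
a `z`-stable subspace of dimension `< N` is killed by `z ^ (N - 1)`, hence lies in `range z`; and a
proper `z`-stable subspace `W` is strictly contained in `z⁻¹ W`. Thus `z` lowers by two the dimension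
of a subspace containing `ker z`, and `z⁻¹` raises by two the dimension of every member of a flag in
`Y_m` with `m < N`.

For `L ∈ X_{m,i}` the space `L_{i+1} = z⁻¹ L_{i-1}` contains `ker z`, and `z L_{i+1} = L_{i-1}` glues
the two halves of `q(L)` into a flag. Conversely, `L' ∈ Y_{m-2}` is the image of
`(L'_1, …, L'_{i-1}, L'_{i-1} + ℂ v, z⁻¹ L'_{i-1}, …, z⁻¹ L'_{m-2})` for any
`v ∈ z⁻¹ L'_{i-1} \ L'_{i-1}`. -/

open Module

section LinearAlgebra

theorem Submodule.lt_comap_of_isNilpotent {R M : Type*} [Semiring R] [AddCommMonoid M]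
    [Module R M] {f : End R M} (hf : IsNilpotent f) {W : Submodule R M} (hW : W.map f ≤ W)
    (hWtop : W ≠ ⊤) : W < W.comap f := by
  refine (Submodule.map_le_iff_le_comap.mp hW).lt_of_ne fun heq => hWtop ?_
  obtain ⟨n, hn⟩ := hf
  have hpow (k : ℕ) : W.comap (f ^ k) = W := by
    induction k with
    | zero => rfl
    | succ k ih => rw [pow_succ, End.mul_eq_comp, Submodule.comap_comp, ih, ← heq]
  rw [← hpow n, hn, Submodule.comap_zero]

variable {K V V' : Type*} [Field K] [AddCommGroup V] [Module K V] [AddCommGroup V'] [Module K V']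

theorem Module.End.pow_finrank_eq_zero_of_isNilpotent [FiniteDimensional K V] {f : End K V}
    (hf : IsNilpotent f) : f ^ finrank K V = 0 := by
  obtain ⟨n, hn⟩ := hf
  have := End.ker_pow_le_ker_pow_finrank f n
  rwa [hn, LinearMap.ker_zero, top_le_iff, LinearMap.ker_eq_top] at this

theorem Submodule.le_ker_pow_of_map_le [FiniteDimensional K V] {f : End K V}
    (hf : IsNilpotent f) {W : Submodule K V} (hW : W.map f ≤ W) {k : ℕ}
    (hk : finrank K W ≤ k) : W ≤ LinearMap.ker (f ^ k) := by
  have hmaps : ∀ x ∈ W, f x ∈ W := fun x hx => hW (Submodule.mem_map_of_mem hx)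
  have hres := End.pow_finrank_eq_zero_of_isNilpotent (End.isNilpotent.restrict hmaps hf)
  intro x hx
  have hx0 : (f ^ finrank K W) x = 0 := by
    have h := LinearMap.congr_fun hres ⟨x, hx⟩
    rw [End.pow_restrict, LinearMap.restrict_apply, LinearMap.zero_apply] at h
    exact congrArg Subtype.val h
  rw [LinearMap.mem_ker, ← pow_sub_mul_pow f hk, End.mul_apply, hx0, map_zero]

theorem Submodule.finrank_map_add_finrank_ker [FiniteDimensional K V] (f : V →ₗ[K] V')
    {W : Submodule K V} (hW : LinearMap.ker f ≤ W) :
    finrank K (W.map f) + finrank K (LinearMap.ker f) = finrank K W := by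
  have h := LinearMap.finrank_range_add_finrank_ker (f.domRestrict W)
  rwa [LinearMap.range_domRestrict, LinearMap.ker_domRestrict,
    (Submodule.comapSubtypeEquivOfLe hW).finrank_eq] at h

theorem Submodule.finrank_comap_eq_add_finrank_ker [FiniteDimensional K V] (f : V →ₗ[K] V')
    {W : Submodule K V'} (hW : W ≤ LinearMap.range f) :
    finrank K (W.comap f) = finrank K W + finrank K (LinearMap.ker f) := by
  rw [← Submodule.finrank_map_add_finrank_ker f (LinearMap.ker_le_comap f),
    Submodule.map_comap_eq_of_le hW]

end LinearAlgebra

section ShiftOperator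

variable {N : ℕ}

theorem zmap_apply_inl (v : E N) (j : Fin N) :
    zmap N v (Sum.inl j) = if h : (j : ℕ) + 1 < N then v (Sum.inl ⟨j + 1, h⟩) else 0 := rfl

theorem zmap_apply_inr (v : E N) (j : Fin N) :
    zmap N v (Sum.inr j) = if h : (j : ℕ) + 1 < N then v (Sum.inr ⟨j + 1, h⟩) else 0 := rfl

theorem zmap_pow_apply_inl (k : ℕ) (v : E N) (j : Fin N) :
    (zmap N ^ k) v (Sum.inl j) = if h : (j : ℕ) + k < N then v (Sum.inl ⟨j + k, h⟩) else 0 := by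
  induction k generalizing v with
  | zero => simp
  | succ k ih =>
    rw [pow_succ, End.mul_apply, ih]
    simp only [zmap_apply_inl]
    split_ifs <;> first | rfl | (exfalso; simp only at *; omega)

theorem zmap_pow_apply_inr (k : ℕ) (v : E N) (j : Fin N) :
    (zmap N ^ k) v (Sum.inr j) = if h : (j : ℕ) + k < N then v (Sum.inr ⟨j + k, h⟩) else 0 := by
  induction k generalizing v with
  | zero => simp
  | succ k ih =>
    rw [pow_succ, End.mul_apply, ih]
    simp only [zmap_apply_inr]
    split_ifs <;> first | rfl | (exfalso; simp only at *; omega)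

theorem isNilpotent_zmap : IsNilpotent (zmap N) := by
  refine ⟨N, ?_⟩
  ext v (j | j)
  · rw [zmap_pow_apply_inl, dif_neg (by omega)]; rfl
  · rw [zmap_pow_apply_inr, dif_neg (by omega)]; rfl

theorem finrank_ker_zmap (hN : 0 < N) : finrank ℂ (LinearMap.ker (zmap N)) = 2 := by
  set e : Fin 2 → E N :=
    ![EuclideanSpace.single (Sum.inl ⟨0, hN⟩) 1, EuclideanSpace.single (Sum.inr ⟨0, hN⟩) 1]
  have hli : LinearIndependent ℂ e := by
    refine LinearIndependent.pair_iff.mpr fun s t hst => ⟨?_, ?_⟩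
    · simpa [e] using congrArg (· (Sum.inl ⟨0, hN⟩)) hst
    · simpa [e] using congrArg (· (Sum.inr ⟨0, hN⟩)) hst
  have hker : LinearMap.ker (zmap N) = Submodule.span ℂ (Set.range e) := by
    apply le_antisymm
    · intro v hv
      have hv' := congrArg WithLp.ofLp (LinearMap.mem_ker.mp hv)
      refine (Submodule.mem_span_range_iff_exists_fun ℂ).mpr
        ⟨![v (Sum.inl ⟨0, hN⟩), v (Sum.inr ⟨0, hN⟩)], ?_⟩
      ext (j | j) <;>
        simp only [e, Fin.sum_univ_two, Matrix.cons_val_zero, Matrix.cons_val_one, PiLp.add_apply,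
          PiLp.smul_apply, PiLp.single_apply, Sum.inl.injEq, Sum.inr.injEq, reduceCtorEq,
          smul_eq_mul, mul_ite, mul_one, mul_zero, if_false, add_zero, zero_add] <;>
        split_ifs with hj
      · rw [hj]
      · have hj' : 0 < (j : ℕ) := Nat.pos_of_ne_zero (Fin.val_ne_of_ne hj)
        simpa [zmap_apply_inl, Nat.sub_add_cancel hj', hN] using
          (congrFun hv' (Sum.inl ⟨j - 1, by omega⟩)).symm
      · rw [hj]
      · have hj' : 0 < (j : ℕ) := Nat.pos_of_ne_zero (Fin.val_ne_of_ne hj)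
        simpa [zmap_apply_inr, Nat.sub_add_cancel hj', hN] using
          (congrFun hv' (Sum.inr ⟨j - 1, by omega⟩)).symm
    · rw [Submodule.span_le]
      rintro _ ⟨k, rfl⟩
      fin_cases k <;> ext (j | j) <;> simp [e, zmap_apply_inl, zmap_apply_inr]
  rw [hker, finrank_span_eq_card hli, Fintype.card_fin]

theorem ker_zmap_pow_le_range (hN : 0 < N) :
    LinearMap.ker (zmap N ^ (N - 1)) ≤ LinearMap.range (zmap N) := by
  intro w hw
  have hw' := congrArg WithLp.ofLp (LinearMap.mem_ker.mp hw)
  have htop_l : w (Sum.inl ⟨N - 1, by omega⟩) = 0 := by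
    simpa [zmap_pow_apply_inl, hN] using congrFun hw' (Sum.inl ⟨0, hN⟩)
  have htop_r : w (Sum.inr ⟨N - 1, by omega⟩) = 0 := by
    simpa [zmap_pow_apply_inr, hN] using congrFun hw' (Sum.inr ⟨0, hN⟩)
  -- the top coordinates of `w` vanish, so shifting `w` up gives a preimage
  refine ⟨WithLp.toLp 2 (Sum.elim
    (fun j => if h : 0 < (j : ℕ) then w (Sum.inl ⟨j - 1, by omega⟩) else 0)
    (fun j => if h : 0 < (j : ℕ) then w (Sum.inr ⟨j - 1, by omega⟩) else 0)), ?_⟩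
  ext (j | j) <;> simp only [zmap_apply_inl, zmap_apply_inr] <;> split_ifs with h
  · simp
  · rw [← htop_l, show j = ⟨N - 1, by omega⟩ from Fin.ext (by simp only; omega)]
  · simp
  · rw [← htop_r, show j = ⟨N - 1, by omega⟩ from Fin.ext (by simp only; omega)]

theorem le_range_zmap_of_map_le {W : Submodule ℂ (E N)} (hW : W.map (zmap N) ≤ W)
    (hdim : finrank ℂ W < N) : W ≤ LinearMap.range (zmap N) :=
  (W.le_ker_pow_of_map_le isNilpotent_zmap hW (Nat.le_sub_one_of_lt hdim)).trans
    (ker_zmap_pow_le_range (by omega))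

theorem finrank_map_zmap_add_two (hN : 0 < N) {W : Submodule ℂ (E N)}
    (hW : LinearMap.ker (zmap N) ≤ W) : finrank ℂ (W.map (zmap N)) + 2 = finrank ℂ W := by
  rw [← finrank_ker_zmap hN]
  exact W.finrank_map_add_finrank_ker _ hW

theorem finrank_comap_zmap (hN : 0 < N) {W : Submodule ℂ (E N)}
    (hW : W ≤ LinearMap.range (zmap N)) : finrank ℂ (W.comap (zmap N)) = finrank ℂ W + 2 := by
  rw [← finrank_ker_zmap hN]
  exact W.finrank_comap_eq_add_finrank_ker _ hW

end ShiftOperator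

section Flags

variable {N m i : ℕ}

theorem mem_Ym_of_monotone {L : Fin (m + 1) → Submodule ℂ (E N)} (hmono : Monotone L)
    (hdim : ∀ j, finrank ℂ (L j) = j) (hstab : ∀ j, (L j).map (zmap N) ≤ L j) : L ∈ Ym N m :=
  ⟨Submodule.finrank_eq_zero.mp (hdim 0),
    hmono.strictMono_of_injective fun a b h => Fin.ext (by rw [← hdim a, ← hdim b, h]),
    hdim, hstab⟩

theorem qRaw_mem_Ym (hm : 2 ≤ m) (hmN : m ≤ N) (h1 : 1 ≤ i) (h2 : i ≤ m - 1)
    {L : Fin (m + 1) → Submodule ℂ (E N)} (hL : L ∈ Xmi N m i) :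
    qRaw N m i hm L ∈ Ym N (m - 2) := by
  obtain ⟨⟨-, hmono, hdim, hstab⟩, hX⟩ := hL
  replace hX := hX (by omega) (by omega)
  have hle {a b : ℕ} {ha : a < m + 1} {hb : b < m + 1} (hab : a ≤ b) : L ⟨a, ha⟩ ≤ L ⟨b, hb⟩ :=
    hmono.monotone (Fin.mk_le_mk.mpr hab)
  have hker {a : ℕ} {ha : a < m + 1} (hia : i + 1 ≤ a) : LinearMap.ker (zmap N) ≤ L ⟨a, ha⟩ :=
    (hX ▸ LinearMap.ker_le_comap _).trans (hle hia)
  have hmap : (L ⟨i + 1, by omega⟩).map (zmap N) = L ⟨i - 1, by omega⟩ := by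
    rw [hX]
    exact Submodule.map_comap_eq_of_le
      (le_range_zmap_of_map_le (hstab _) (by rw [hdim, Fin.val_mk]; omega))
  apply mem_Ym_of_monotone
  · refine Fin.monotone_iff_le_succ.mpr fun j => ?_
    simp only [qRaw, Fin.val_castSucc, Fin.val_succ]
    split_ifs with hj hj'
    · exact hle (by omega)
    · exact (hle (by omega)).trans (hmap.symm.le.trans (Submodule.map_mono (hle (by omega))))
    · omega
    · exact Submodule.map_mono (hle (by omega))
  · intro j
    by_cases hj : (j : ℕ) < i
    · rw [qRaw, if_pos hj]
      exact hdim _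
    · rw [qRaw, if_neg hj]
      have := finrank_map_zmap_add_two (by omega) (hker (a := j + 2) (ha := by omega) (by omega))
      rw [hdim] at this
      simp only at this
      omega
  · intro j
    simp only [qRaw]
    split_ifs
    · exact hstab _
    · exact Submodule.map_mono (hstab _)

-- `Fin.clamp` only makes the indices typecheck: it never clamps when `i ≤ m - 1`.
def qLift (m i : ℕ) (L' : Fin (m - 2 + 1) → Submodule ℂ (E N)) (v : E N) :
    Fin (m + 1) → Submodule ℂ (E N) := fun j =>
  if (j : ℕ) < i then L' (Fin.clamp j (m - 2))
  else if (j : ℕ) = i then L' (Fin.clamp (i - 1) (m - 2)) ⊔ ℂ ∙ v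
  else (L' (Fin.clamp (j - 2) (m - 2))).comap (zmap N)

variable {L' : Fin (m - 2 + 1) → Submodule ℂ (E N)} {v : E N}

theorem qLift_of_lt (hi : i ≤ m - 1) {j : Fin (m + 1)} (hj : (j : ℕ) < i) :
    qLift m i L' v j = L' ⟨j, by omega⟩ := by
  simp only [qLift, if_pos hj]
  exact congrArg L' (Fin.ext (Nat.min_eq_left (by omega)))

theorem qLift_self (hi : i ≤ m - 1) {j : Fin (m + 1)} (hj : (j : ℕ) = i) :
    qLift m i L' v j = L' ⟨i - 1, by omega⟩ ⊔ ℂ ∙ v := by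
  simp only [qLift, if_neg (show ¬(j : ℕ) < i by omega), if_pos hj]
  exact congrArg (L' · ⊔ ℂ ∙ v) (Fin.ext (Nat.min_eq_left (by omega)))

theorem qLift_of_gt {j : Fin (m + 1)} (hj : i < (j : ℕ)) :
    qLift m i L' v j = (L' ⟨j - 2, by omega⟩).comap (zmap N) := by
  simp only [qLift, if_neg (show ¬(j : ℕ) < i by omega), if_neg (show ¬(j : ℕ) = i by omega)]
  exact congrArg (fun k => (L' k).comap (zmap N)) (Fin.ext (Nat.min_eq_left (by omega)))

theorem qLift_monotone (h2 : i ≤ m - 1) (hmono : Monotone L')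
    (hstab : ∀ j, (L' j).map (zmap N) ≤ L' j)
    (hv : v ∈ (L' ⟨i - 1, by omega⟩).comap (zmap N)) : Monotone (qLift m i L' v) := by
  have hle {a b : ℕ} {ha : a < m - 2 + 1} {hb : b < m - 2 + 1} (hab : a ≤ b) :
      L' ⟨a, ha⟩ ≤ L' ⟨b, hb⟩ := hmono (Fin.mk_le_mk.mpr hab)
  refine Fin.monotone_iff_le_succ.mpr fun j => ?_
  have hc : (j.castSucc : ℕ) = j := rfl
  have hs : (j.succ : ℕ) = j + 1 := rfl
  rcases lt_trichotomy ((j : ℕ) + 1) i with hj | hj | hj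
  · rw [qLift_of_lt h2 (by omega), qLift_of_lt h2 (by omega)]
    exact hle (by omega)
  · rw [qLift_of_lt h2 (by omega), qLift_self h2 (by omega)]
    exact (hle (by omega)).trans le_sup_left
  rcases (Nat.lt_succ_iff.mp hj).eq_or_lt with hj' | hj'
  · rw [qLift_self h2 (by omega), qLift_of_gt (by omega)]
    exact sup_le ((hle (by omega)).trans (Submodule.map_le_iff_le_comap.mp (hstab _)))
      ((Submodule.span_singleton_le_iff_mem _ _).mpr (Submodule.comap_mono (hle (by omega)) hv))
  · rw [qLift_of_gt (by omega), qLift_of_gt (by omega)]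
    exact Submodule.comap_mono (hle (by omega))

theorem qLift_mem_Xmi (hmN : m ≤ N) (h1 : 1 ≤ i) (h2 : i ≤ m - 1) (hL' : L' ∈ Ym N (m - 2))
    (hv : v ∈ (L' ⟨i - 1, by omega⟩).comap (zmap N)) (hv' : v ∉ L' ⟨i - 1, by omega⟩) :
    qLift m i L' v ∈ Xmi N m i := by
  obtain ⟨-, hmono, hdim, hstab⟩ := hL'
  have hcomap (j) : L' j ≤ (L' j).comap (zmap N) := Submodule.map_le_iff_le_comap.mp (hstab j)
  refine ⟨mem_Ym_of_monotone (qLift_monotone h2 hmono.monotone hstab hv) (fun j => ?_)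
    (fun j => ?_), fun _ _ => ?_⟩
  · rcases lt_trichotomy (j : ℕ) i with hj | hj | hj
    · rw [qLift_of_lt h2 hj, hdim]
    · rw [qLift_self h2 hj, Submodule.finrank_sup_span_singleton hv', hdim, Fin.val_mk]
      omega
    · rw [qLift_of_gt hj, finrank_comap_zmap (by omega)
        (le_range_zmap_of_map_le (hstab _) (by rw [hdim, Fin.val_mk]; omega)), hdim, Fin.val_mk]
      omega
  · rw [Submodule.map_le_iff_le_comap]
    rcases lt_trichotomy (j : ℕ) i with hj | hj | hj
    · rw [qLift_of_lt h2 hj]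
      exact hcomap _
    · rw [qLift_self h2 hj]
      exact sup_le ((hcomap _).trans (Submodule.comap_mono le_sup_left))
        ((Submodule.span_singleton_le_iff_mem _ _).mpr (Submodule.comap_mono le_sup_left hv))
    · rw [qLift_of_gt hj]
      exact Submodule.comap_mono (hcomap _)
  · rw [qLift_of_gt (by simp), qLift_of_lt h2 (by simp; omega)]
    rfl

theorem qRaw_qLift (hm : 2 ≤ m) (hmN : m ≤ N) (h2 : i ≤ m - 1) (hL' : L' ∈ Ym N (m - 2)) :
    qRaw N m i hm (qLift m i L' v) = L' := by
  obtain ⟨-, -, hdim, hstab⟩ := hL'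
  funext j
  by_cases hj : (j : ℕ) < i
  · rw [qRaw, if_pos hj, qLift_of_lt h2 hj]
  · rw [qRaw, if_neg hj, qLift_of_gt (by simp only; omega)]
    exact Submodule.map_comap_eq_of_le
      (le_range_zmap_of_map_le (hstab _) (by rw [hdim]; omega))

end Flags

theorem q_wellDefined_surjective (N m i : ℕ) (hm : 2 ≤ m) (hmN : m ≤ N)
    (h1 : 1 ≤ i) (h2 : i ≤ m - 1) :
    (∀ L ∈ Xmi N m i, qRaw N m i hm L ∈ Ym N (m - 2)) ∧
    (∀ L' ∈ Ym N (m - 2), ∃ L ∈ Xmi N m i, qRaw N m i hm L = L') := by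
  refine ⟨fun L hL => qRaw_mem_Ym hm hmN h1 h2 hL, fun L' hL' => ?_⟩
  have hW : L' ⟨i - 1, by omega⟩ < ⊤ := Submodule.lt_top_of_finrank_lt_finrank (by
    rw [hL'.2.2.1, finrank_euclideanSpace, Fintype.card_sum, Fintype.card_fin]
    omega)
  obtain ⟨v, hv, hv'⟩ := SetLike.exists_of_lt
    (Submodule.lt_comap_of_isNilpotent isNilpotent_zmap (hL'.2.2.2 _) hW.ne)
  exact ⟨qLift m i L' v, qLift_mem_Xmi hmN h1 h2 hL' hv hv', qRaw_qLift hm hmN h2 hL'⟩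
end
end

section
/- Let ψ_{m,i} : X_{m,i} → A_{m,i} be the restriction of φ_m to X_{m,i}. Then g_{m,i} ∘ ψ_{m,i} = φ_{m−2} ∘ q_{m,i} as maps from X_{m,i} to (ℙ¹)^{m−2}. -/
open scoped ComplexInnerProductSpace

noncomputable section

/-!
The shift `z` is a partial isometry whose kernel is spanned by `e₁` and `f₁`, and `C ∘ z = C` on
`(ker z)ᗮ`. Hence, whenever `ker z ≤ M ≤ L`, `z` maps `L ⊓ Mᗮ` onto `zL ⊓ (zM)ᗮ` and `C` sends
both to the same subspace. On `X_{m,i}` every `L_j` with `j > i` contains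
`L_{i+1} = z⁻¹(L_{i-1}) ⊇ ker z`, and since `dim ker z ≤ 2` a dimension count gives
`L_{i-1} ≤ range z`, i.e. `z L_{i+1} = L_{i-1}`. So from the `i`-th entry on, the entries of
`φ_{m-2}(q L)` are `C(zL_{k+2} ⊓ (zL_{k+1})ᗮ) = C(L_{k+2} ⊓ L_{k+1}ᗮ)`, which are the entries of
`g(φ_m L)`; the entries before the `i`-th agree verbatim.
-/

open Submodule Module LinearMap

section PartialIsometry

variable {𝕜 V V' : Type*} [RCLike 𝕜] [NormedAddCommGroup V] [InnerProductSpace 𝕜 V]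
  [NormedAddCommGroup V'] [InnerProductSpace 𝕜 V'] {z : V →ₗ[𝕜] V'}

theorem map_inf_orthogonal_of_isometry_on_orthogonal_ker [(ker z).HasOrthogonalProjection]
    (hz : ∀ v, ∀ u ∈ (ker z)ᗮ, inner 𝕜 (z v) (z u) = inner 𝕜 v u)
    {M L : Submodule 𝕜 V} (hkM : ker z ≤ M) (hML : M ≤ L) :
    (L ⊓ Mᗮ).map z = L.map z ⊓ (M.map z)ᗮ := by
  apply le_antisymm
  · rintro _ ⟨u, ⟨huL, huM⟩, rfl⟩
    refine ⟨⟨u, huL, rfl⟩, ?_⟩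
    rintro _ ⟨v, hv, rfl⟩
    rw [hz v u (orthogonal_le hkM huM)]
    exact huM v hv
  · rintro _ ⟨⟨u, huL, rfl⟩, hu⟩
    obtain ⟨k, hk, w, hw, rfl⟩ := exists_add_mem_mem_orthogonal (K := ker z) u
    have hzw : z (k + w) = z w := by rw [map_add, mem_ker.mp hk, zero_add]
    refine ⟨w, ⟨?_, fun v hv => ?_⟩, hzw.symm⟩
    · simpa using sub_mem huL (hML (hkM hk))
    · rw [← hz v w hw, ← hzw]
      exact hu _ ⟨v, hv, rfl⟩

end PartialIsometry

theorem Submodule.map_map_of_eqOn {R M M₂ M₃ : Type*} [Semiring R] [AddCommMonoid M]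
    [AddCommMonoid M₂] [AddCommMonoid M₃] [Module R M] [Module R M₂] [Module R M₃]
    {f : M →ₗ[R] M₂} {g : M₂ →ₗ[R] M₃} {h : M →ₗ[R] M₃} {S : Submodule R M}
    (hS : Set.EqOn (g ∘ₗ f) h S) : (S.map f).map g = S.map h := by
  rw [← map_comp, ← range_domRestrict, ← range_domRestrict]
  congr 1
  ext ⟨v, hv⟩
  exact hS hv

theorem LinearMap.finrank_range_inf_add_finrank_ker {K V W : Type*} [DivisionRing K]
    [AddCommGroup V] [Module K V] [AddCommGroup W] [Module K W] [FiniteDimensional K V]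
    (f : V →ₗ[K] W) (M : Submodule K W) :
    finrank K ↥(range f ⊓ M) + finrank K (ker f) = finrank K (M.comap f) := by
  have hker : ker f ≤ M.comap f := ker_le_comap f
  rw [← map_comap_eq, ← range_domRestrict, ← (comapSubtypeEquivOfLe hker).finrank_eq,
    ← ker_domRestrict, finrank_range_add_finrank_ker]

theorem Fin.sum_add_eq_sum_of_shift {M : Type*} [AddCommMonoid M] {n : ℕ} (f g : Fin (n + 1) → M)
    (hg : ∀ j : Fin n, g j.castSucc = f j.succ) (hlast : g (Fin.last n) = 0) :
    ∑ j, g j + f 0 = ∑ j, f j := by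
  rw [Fin.sum_univ_castSucc, Fin.sum_univ_succ, hlast, add_zero, add_comm]
  simp only [hg]

section Shift

variable {n : ℕ}

theorem zmap_apply_inl_castSucc (v : E (n + 1)) (j : Fin n) :
    zmap (n + 1) v (Sum.inl j.castSucc) = v (Sum.inl j.succ) :=
  dif_pos (Nat.succ_lt_succ j.isLt)

theorem zmap_apply_inr_castSucc (v : E (n + 1)) (j : Fin n) :
    zmap (n + 1) v (Sum.inr j.castSucc) = v (Sum.inr j.succ) :=
  dif_pos (Nat.succ_lt_succ j.isLt)

theorem zmap_apply_inl_last (v : E (n + 1)) : zmap (n + 1) v (Sum.inl (Fin.last n)) = 0 :=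
  dif_neg (lt_irrefl _)

theorem zmap_apply_inr_last (v : E (n + 1)) : zmap (n + 1) v (Sum.inr (Fin.last n)) = 0 :=
  dif_neg (lt_irrefl _)

theorem ker_zmap : ker (zmap (n + 1)) =
    span ℂ {EuclideanSpace.single (Sum.inl 0) 1, EuclideanSpace.single (Sum.inr 0) 1} := by
  apply le_antisymm
  · intro v hv
    rw [mem_span_pair]
    refine ⟨v (Sum.inl 0), v (Sum.inr 0), ?_⟩
    ext (j | j) <;> cases j using Fin.cases <;>
      simp [← zmap_apply_inl_castSucc, ← zmap_apply_inr_castSucc, mem_ker.mp hv]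
  · rw [span_le]
    rintro _ (rfl | rfl) <;> ext (j | j) <;> cases j using Fin.lastCases <;>
      simp [zmap_apply_inl_castSucc, zmap_apply_inr_castSucc, zmap_apply_inl_last,
        zmap_apply_inr_last, Fin.succ_ne_zero]

theorem finrank_ker_zmap_le : finrank ℂ (ker (zmap (n + 1))) ≤ 2 := by
  rw [ker_zmap]
  refine (finrank_span_le_card _).trans ?_
  rw [Set.toFinset_insert, Set.toFinset_singleton]
  exact Finset.card_le_two

theorem apply_zero_eq_zero_of_mem_orthogonal_ker_zmap {u : E (n + 1)}
    (hu : u ∈ (ker (zmap (n + 1)))ᗮ) : u (Sum.inl 0) = 0 ∧ u (Sum.inr 0) = 0 := by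
  rw [ker_zmap] at hu
  constructor
  · simpa [EuclideanSpace.inner_single_left] using hu _ (subset_span (Set.mem_insert _ _))
  · simpa [EuclideanSpace.inner_single_left] using
      hu _ (subset_span (Set.mem_insert_of_mem _ rfl))

theorem inner_zmap_zmap_of_mem_orthogonal_ker (v : E (n + 1)) {u : E (n + 1)}
    (hu : u ∈ (ker (zmap (n + 1)))ᗮ) : ⟪zmap (n + 1) v, zmap (n + 1) u⟫ = ⟪v, u⟫ := by
  obtain ⟨hl, hr⟩ := apply_zero_eq_zero_of_mem_orthogonal_ker_zmap hu
  have hinl := Fin.sum_add_eq_sum_of_shift (fun j => ⟪v (Sum.inl j), u (Sum.inl j)⟫)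
    (fun j => ⟪zmap (n + 1) v (Sum.inl j), zmap (n + 1) u (Sum.inl j)⟫)
    (by simp [zmap_apply_inl_castSucc]) (by simp [zmap_apply_inl_last])
  have hinr := Fin.sum_add_eq_sum_of_shift (fun j => ⟪v (Sum.inr j), u (Sum.inr j)⟫)
    (fun j => ⟪zmap (n + 1) v (Sum.inr j), zmap (n + 1) u (Sum.inr j)⟫)
    (by simp [zmap_apply_inr_castSucc]) (by simp [zmap_apply_inr_last])
  simp only [hl, hr, inner_zero_right, add_zero] at hinl hinr
  simp only [PiLp.inner_apply, Fintype.sum_sum_type, hinl, hinr]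

theorem Cmap_zmap_of_mem_orthogonal_ker {v : E (n + 1)} (hv : v ∈ (ker (zmap (n + 1)))ᗮ) :
    Cmap (n + 1) (zmap (n + 1) v) = Cmap (n + 1) v := by
  obtain ⟨hl, hr⟩ := apply_zero_eq_zero_of_mem_orthogonal_ker_zmap hv
  have hinl := Fin.sum_add_eq_sum_of_shift (fun j => v (Sum.inl j))
    (fun j => zmap (n + 1) v (Sum.inl j))
    (by simp [zmap_apply_inl_castSucc]) (by simp [zmap_apply_inl_last])
  have hinr := Fin.sum_add_eq_sum_of_shift (fun j => v (Sum.inr j))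
    (fun j => zmap (n + 1) v (Sum.inr j))
    (by simp [zmap_apply_inr_castSucc]) (by simp [zmap_apply_inr_last])
  simp only [hl, hr, add_zero] at hinl hinr
  ext i
  fin_cases i <;> simp [Cmap, hinl, hinr]

theorem Cmap_map_zmap_inf_orthogonal {M L : Submodule ℂ (E (n + 1))}
    (hkM : ker (zmap (n + 1)) ≤ M) (hML : M ≤ L) :
    (L.map (zmap (n + 1)) ⊓ (M.map (zmap (n + 1)))ᗮ).map (Cmap (n + 1)) =
      (L ⊓ Mᗮ).map (Cmap (n + 1)) := by
  rw [← map_inf_orthogonal_of_isometry_on_orthogonal_ker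
    (fun v _ hu => inner_zmap_zmap_of_mem_orthogonal_ker v hu) hkM hML]
  exact map_map_of_eqOn fun v hv => Cmap_zmap_of_mem_orthogonal_ker (orthogonal_le hkM hv.2)

theorem le_range_zmap_of_finrank_comap {M : Submodule ℂ (E (n + 1))}
    (hM : finrank ℂ (M.comap (zmap (n + 1))) = finrank ℂ M + 2) :
    M ≤ range (zmap (n + 1)) := by
  have := (zmap (n + 1)).finrank_range_inf_add_finrank_ker M
  have := finrank_ker_zmap_le (n := n)
  exact inf_eq_right.mp (eq_of_le_of_finrank_le inf_le_right (by omega))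

end Shift

theorem g_phi_eq_phi_q_general (N m i : ℕ) (hm : 2 ≤ m) (hmN : m ≤ N) :
    ∀ L ∈ Xmi N m i, gRaw m i (phiRaw N m L) = phiRaw N (m - 2) (qRaw N m i hm L) := by
  rintro L ⟨⟨-, hmono, hrank, -⟩, hX⟩
  obtain ⟨n, rfl⟩ : ∃ n, N = n + 1 := ⟨N - 1, by omega⟩
  have mono {a b : ℕ} (ha : a < m + 1) (hb : b < m + 1) (hab : a ≤ b) : L ⟨a, ha⟩ ≤ L ⟨b, hb⟩ :=
    hmono.monotone (Fin.mk_le_mk.mpr hab)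
  funext ⟨k, hk⟩
  simp only [gRaw, phiRaw, qRaw, Fin.succ_mk, Fin.castSucc_mk]
  split_ifs
  · rfl
  · omega
  · obtain rfl : i = k + 1 := by omega
    have hXk : L ⟨k + 2, by omega⟩ = (L ⟨k, by omega⟩).comap (zmap (n + 1)) :=
      hX (by omega) (by omega)
    have hrange : L ⟨k, by omega⟩ ≤ range (zmap (n + 1)) :=
      le_range_zmap_of_finrank_comap (by rw [← hXk, hrank, hrank])
    have hLk : (L ⟨k + 2, by omega⟩).map (zmap (n + 1)) = L ⟨k, by omega⟩ := by
      rw [hXk]; exact map_comap_eq_self hrange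
    have hker : ker (zmap (n + 1)) ≤ L ⟨k + 2, by omega⟩ := by rw [hXk]; exact ker_le_comap _
    rw [← hLk]
    exact (Cmap_map_zmap_inf_orthogonal hker (mono _ _ (by omega))).symm
  · have hker : ker (zmap (n + 1)) ≤ L ⟨i + 1, by omega⟩ := by
      rw [hX (by omega) (by omega)]; exact ker_le_comap _
    exact (Cmap_map_zmap_inf_orthogonal (hker.trans (mono _ _ (by omega)))
      (mono _ _ (by omega))).symm

theorem g_phi_eq_phi_q (N m i : ℕ) (hm : 2 ≤ m) (hmN : m ≤ N)
    (h1 : 1 ≤ i) (h2 : i ≤ m - 1) :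
    ∀ L ∈ Xmi N m i, gRaw m i (phiRaw N m L) = phiRaw N (m - 2) (qRaw N m i hm L) :=
  g_phi_eq_phi_q_general N m i hm hmN
end
end

section
/- Suppose (L_1,…,L_{2n}) ∈ Y_{2n} satisfies L_{s_a(j)} = z^{−d_a(j)} L_{j−1} for all j ∈ O_a, where a ∈ B^n is a crossingless matching. Then L_{2n} = E_n = ker(z^n). -/
open scoped ComplexInnerProductSpace

noncomputable section

/-!
Call `r` a closed prefix of the matching if every pair starting in `{1,…,r}` also ends there.
If `r > 0` is closed, then `r` is the right end of a pair `(j, r)`, and by non-crossing `j - 1`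
is closed as well. Closed prefixes are unions of pairs, hence of even length, so the defining
relation `L_r = z^{-(r-j+1)/2} L_{j-1}` together with `L_{j-1} = ker z^{(j-1)/2}` gives
`L_r = ker z^{r/2}` by strong induction on `r`. The case `r = 2n` is the theorem.
-/

open Finset Fin.NatCast

namespace CrossinglessMatching

variable {n : ℕ} (a : CrossinglessMatching n)

def IsClosedPrefix (r : ℕ) : Prop :=
  ∀ p ∈ a.pairs, p.1 ≤ r → p.2 ≤ r

lemma eq_of_mem_of_mem {p q : ℕ × ℕ} (hp : p ∈ a.pairs) (hq : q ∈ a.pairs) {k : ℕ}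
    (hpk : p.1 = k ∨ p.2 = k) (hqk : q.1 = k ∨ q.2 = k) : p = q := by
  have := a.lt p hp
  have := a.mem_range p hp
  obtain ⟨u, -, hu⟩ := a.cover k (by omega) (by omega)
  exact (hu p ⟨hp, hpk⟩).trans (hu q ⟨hq, hqk⟩).symm

lemma isClosedPrefix_two_mul : a.IsClosedPrefix (2 * n) :=
  fun p hp _ => (a.mem_range p hp).2

variable {a}

lemma IsClosedPrefix.exists_mem_pairs {r : ℕ} (hr : a.IsClosedPrefix r) (hr1 : 1 ≤ r)
    (hr2 : r ≤ 2 * n) : ∃ j, (j, r) ∈ a.pairs := by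
  obtain ⟨p, ⟨hp, hpr⟩, -⟩ := a.cover r hr1 hr2
  have hp2 : p.2 = r := by
    have := a.lt p hp
    rcases hpr with h | h
    · have := hr p hp h.le
      omega
    · exact h
  exact ⟨p.1, hp2 ▸ hp⟩

lemma IsClosedPrefix.sub_one {r j : ℕ} (hr : a.IsClosedPrefix r) (hjr : (j, r) ∈ a.pairs) :
    a.IsClosedPrefix (j - 1) := by
  intro q hq hq1
  by_contra! hq2
  have := (a.mem_range _ hjr).1
  have := a.lt _ hjr
  have := a.lt q hq
  have hq2r : q.2 ≤ r := hr q hq (by omega)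
  have hne : q ≠ (j, r) := by
    rintro rfl
    dsimp only at hq1
    omega
  have hqj : q.2 ≠ j := fun h => hne (a.eq_of_mem_of_mem hq hjr (Or.inr h) (Or.inl rfl))
  have hqr : q.2 ≠ r := fun h => hne (a.eq_of_mem_of_mem hq hjr (Or.inr h) (Or.inr rfl))
  exact a.noncross q.1 j q.2 r (by omega) (by omega) (by omega) hq hjr

lemma IsClosedPrefix.even {r : ℕ} (hr : a.IsClosedPrefix r) (hr2 : r ≤ 2 * n) : Even r := by
  classical
  set F := a.pairs.filter (·.2 ≤ r)
  have hunion : Icc 1 r = F.biUnion fun p => {p.1, p.2} := by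
    ext k
    simp only [mem_Icc, mem_biUnion, mem_filter, mem_insert, mem_singleton, F]
    constructor
    · rintro ⟨hk1, hk2⟩
      obtain ⟨p, ⟨hp, hpk⟩, -⟩ := a.cover k hk1 (hk2.trans hr2)
      have := a.lt p hp
      refine ⟨p, ⟨hp, ?_⟩, by omega⟩
      rcases hpk with h | h
      · exact hr p hp (by omega)
      · omega
    · rintro ⟨p, ⟨hp, hp2⟩, hk⟩
      have := a.lt p hp
      have := (a.mem_range p hp).1
      omega
  have hdisj : (F : Set (ℕ × ℕ)).PairwiseDisjoint fun p => ({p.1, p.2} : Finset ℕ) := by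
    intro p hp q hq hpq
    simp only [coe_filter, Set.mem_ofPred_eq, F] at hp hq
    refine disjoint_left.2 fun k hkp hkq => hpq ?_
    simp only [mem_insert, mem_singleton] at hkp hkq
    exact a.eq_of_mem_of_mem hp.1 hq.1 (k := k) (by omega) (by omega)
  have hcard : ∀ p ∈ F, ({p.1, p.2} : Finset ℕ).card = 2 := by
    intro p hp
    have := a.lt p (mem_filter.1 hp).1
    exact card_pair (by omega)
  refine ⟨F.card, ?_⟩
  calc r = (Icc 1 r).card := by simp
    _ = ∑ _p ∈ F, 2 := by rw [hunion, card_biUnion hdisj, sum_congr rfl hcard]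
    _ = F.card + F.card := by rw [sum_const, smul_eq_mul, mul_two]

end CrossinglessMatching

lemma LinearMap.comap_pow_ker_pow {R M : Type*} [Semiring R] [AddCommMonoid M] [Module R M]
    (f : Module.End R M) (k l : ℕ) :
    (LinearMap.ker (f ^ k)).comap (f ^ l) = LinearMap.ker (f ^ (k + l)) := by
  rw [← LinearMap.ker_comp, ← Module.End.mul_eq_comp, pow_add]

theorem CrossinglessMatching.IsClosedPrefix.eq_ker_pow {R M : Type*} [Semiring R]
    [AddCommMonoid M] [Module R M] {n : ℕ} {a : CrossinglessMatching n} (f : Module.End R M)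
    (L : Fin (2 * n + 1) → Submodule R M) (h0 : L 0 = ⊥)
    (hL : ∀ p ∈ a.pairs, L (p.2 : Fin (2 * n + 1)) =
      (L ((p.1 - 1 : ℕ) : Fin (2 * n + 1))).comap (f ^ ((p.2 - p.1 + 1) / 2)))
    {r : ℕ} (hr : a.IsClosedPrefix r) (hr2 : r ≤ 2 * n) :
    L r = LinearMap.ker (f ^ (r / 2)) := by
  induction r using Nat.strong_induction_on with
  | _ r ih =>
    rcases Nat.eq_zero_or_pos r with rfl | hpos
    · simp [h0, Module.End.one_eq_id]
    obtain ⟨j, hjr⟩ := hr.exists_mem_pairs hpos hr2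
    have := a.lt _ hjr
    have hj := hr.sub_one hjr
    obtain ⟨u, hu⟩ := hr.even hr2
    obtain ⟨v, hv⟩ := hj.even (by omega)
    have hexp : (j - 1) / 2 + (r - j + 1) / 2 = r / 2 := by omega
    rw [hL _ hjr, ih (j - 1) (by omega) hj (by omega), LinearMap.comap_pow_ker_pow, hexp]

theorem Ka_top_eq_En_general (N n : ℕ)
    (a : CrossinglessMatching n) (L : Fin (2 * n + 1) → Submodule ℂ (E N))
    (hL : L ∈ KaSet N (2 * n) a.pairs) :
    L (Fin.last (2 * n)) = LinearMap.ker ((zmap N) ^ n) := by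
  have h := a.isClosedPrefix_two_mul.eq_ker_pow (zmap N) L hL.1.1 hL.2 le_rfl
  rwa [Fin.natCast_eq_last, Nat.mul_div_cancel_left n two_pos] at h

theorem Ka_top_eq_En (N n : ℕ) (hn : 1 ≤ n) (hN : 2 * n ≤ N)
    (a : CrossinglessMatching n) (L : Fin (2 * n + 1) → Submodule ℂ (E N))
    (hL : L ∈ KaSet N (2 * n) a.pairs) :
    L (Fin.last (2 * n)) = LinearMap.ker ((zmap N) ^ n) :=
  Ka_top_eq_En_general N n a L hL
end
end
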